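/- arXiv:2503.19239 — 6 statements merged into one kernel-verified Lean document; each statement's English description precedes it below -/
import Mathlib

section
/- In the q-Hamming graph, the graph distance between two subspaces A and B equals Δ(A,B) = dim A + dim B - 2·dim(A∩B). -/
open Module

/-- The `n`-dimensional `q`-Hamming graph on the subspaces of `K^n`:
`A` and `B` are adjacent iff one contains the other with dimension difference 1. -/
def qHammingGraph (K : Type*) [Field K] (n : ℕ) :
    SimpleGraph (Submodule K (Fin n → K)) where
  Adj A B := (A ≤ B ∧ finrank K ↥B = finrank K ↥A + 1) ∨
    (B ≤ A ∧ finrank K ↥A = finrank K ↥B + 1)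
  symm := ⟨by intro A B h; tauto⟩
  loopless := ⟨by intro A h; rcases h with ⟨-, h⟩ | ⟨-, h⟩ <;> omega⟩

/-!
Walking up from `A ⊓ B` to `A` and to `B`, one dimension at a time, gives a path of length
`Δ(A, B) = dim A + dim B - 2 dim (A ⊓ B)`. Conversely, `X ↦ Δ(X, B)` changes by at most one
along an edge: if `W ≤ Z` with `dim Z = dim W + 1`, modularity of `dim` gives
`dim (W ⊓ B) ≤ dim (Z ⊓ B) ≤ dim (W ⊓ B) + 1`. Since `Δ(B, B) = 0`, every walk from `A` to `B`
has length at least `Δ(A, B)`.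
-/

namespace Submodule

variable {K V : Type*} [DivisionRing K] [AddCommGroup V] [Module K V] [FiniteDimensional K V]

lemma exists_le_le_finrank_eq_succ_of_lt {C A : Submodule K V} (h : C < A) :
    ∃ D : Submodule K V, C ≤ D ∧ D ≤ A ∧ finrank K D = finrank K C + 1 := by
  obtain ⟨x, hxA, hxC⟩ := SetLike.exists_of_lt h
  have hCD : C < C ⊔ K ∙ x :=
    left_lt_sup.2 fun hx => hxC (hx (mem_span_singleton_self x))
  refine ⟨C ⊔ K ∙ x, hCD.le, sup_le h.le ((span_singleton_le_iff_mem _ _).2 hxA), ?_⟩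
  have hlt := finrank_lt_finrank_of_lt hCD
  have hle := finrank_add_le_finrank_add_finrank C (K ∙ x)
  have hx : finrank K (K ∙ x) = 1 := finrank_span_singleton fun hx0 => hxC (hx0 ▸ C.zero_mem)
  omega

lemma finrank_inf_add_finrank_le_of_le {W Z : Submodule K V} (hWZ : W ≤ Z)
    (B : Submodule K V) :
    finrank K ↥(Z ⊓ B) + finrank K W ≤ finrank K ↥(W ⊓ B) + finrank K Z := by
  have hmod := finrank_sup_add_finrank_inf_eq W (Z ⊓ B)
  rw [← inf_assoc, inf_eq_left.2 hWZ] at hmod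
  have hsup : finrank K ↥(W ⊔ Z ⊓ B) ≤ finrank K Z := finrank_mono (sup_le hWZ inf_le_left)
  omega

end Submodule

namespace qHammingGraph

variable {K : Type*} [Field K] {n : ℕ}

lemma exists_walk_length_add_finrank_eq_of_le {C A : Submodule K (Fin n → K)} (h : C ≤ A) :
    ∃ w : (qHammingGraph K n).Walk C A, w.length + finrank K C = finrank K A := by
  obtain ⟨k, hk⟩ : ∃ k, finrank K A = finrank K C + k :=
    Nat.exists_eq_add_of_le (Submodule.finrank_mono h)
  induction k generalizing C with
  | zero =>
    obtain rfl : C = A := Submodule.eq_of_le_of_finrank_le h (by omega)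
    exact ⟨.nil, by simp⟩
  | succ k ih =>
    have hCA : C < A := lt_of_le_of_ne h (by rintro rfl; omega)
    obtain ⟨D, hCD, hDA, hD⟩ := Submodule.exists_le_le_finrank_eq_succ_of_lt hCA
    obtain ⟨w, hw⟩ := ih hDA (by omega)
    have hadj : (qHammingGraph K n).Adj C D := Or.inl ⟨hCD, hD⟩
    exact ⟨.cons hadj w, by rw [SimpleGraph.Walk.length_cons]; omega⟩

lemma finrank_add_le_of_adj {X Y : Submodule K (Fin n → K)} (h : (qHammingGraph K n).Adj X Y)
    (B : Submodule K (Fin n → K)) :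
    finrank K X + 2 * finrank K ↥(Y ⊓ B) ≤ finrank K Y + 2 * finrank K ↥(X ⊓ B) + 1 := by
  rcases h with ⟨hXY, hY⟩ | ⟨hYX, hX⟩
  · have := Submodule.finrank_inf_add_finrank_le_of_le hXY B
    have := Submodule.finrank_mono (inf_le_inf_right B hXY)
    omega
  · have := Submodule.finrank_inf_add_finrank_le_of_le hYX B
    have := Submodule.finrank_mono (inf_le_inf_right B hYX)
    omega

lemma finrank_add_finrank_le_length_add {X B : Submodule K (Fin n → K)}
    (w : (qHammingGraph K n).Walk X B) :
    finrank K X + finrank K B ≤ w.length + 2 * finrank K ↥(X ⊓ B) := by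
  induction w with
  | nil => rw [inf_idem]; omega
  | @cons X Y B h w ih =>
    have := finrank_add_le_of_adj h B
    rw [SimpleGraph.Walk.length_cons]
    omega

end qHammingGraph

theorem qHamming_dist_eq_general {K : Type*} [Field K] (n : ℕ)
    (A B : Submodule K (Fin n → K)) :
    (qHammingGraph K n).dist A B =
      finrank K ↥A + finrank K ↥B - 2 * finrank K ↥(A ⊓ B) := by
  obtain ⟨wA, hwA⟩ :=
    qHammingGraph.exists_walk_length_add_finrank_eq_of_le (inf_le_left : A ⊓ B ≤ A)
  obtain ⟨wB, hwB⟩ :=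
    qHammingGraph.exists_walk_length_add_finrank_eq_of_le (inf_le_right : A ⊓ B ≤ B)
  have hupper := SimpleGraph.dist_le (wA.reverse.append wB)
  rw [SimpleGraph.Walk.length_append, SimpleGraph.Walk.length_reverse] at hupper
  obtain ⟨w, hw⟩ := SimpleGraph.Reachable.exists_walk_length_eq_dist ⟨wA.reverse.append wB⟩
  have hlower := qHammingGraph.finrank_add_finrank_le_length_add w
  omega

/-- In the `q`-Hamming graph, the graph distance between subspaces `A` and `B`
equals `Δ(A,B) = dim A + dim B - 2 dim(A ∩ B)`. -/
theorem qHamming_dist_eq {K : Type*} [Field K] [Fintype K] (q n : ℕ)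
    (hq : Fintype.card K = q) (hpp : IsPrimePow q)
    (A B : Submodule K (Fin n → K)) :
    (qHammingGraph K n).dist A B =
      finrank K ↥A + finrank K ↥B - 2 * finrank K ↥(A ⊓ B) :=
  qHamming_dist_eq_general n A B
end

section
/- Let F be a family of subspaces of 𝔽_q^n with diam(F) = d (in the metric Δ), and define m_F := min{x ∈ ℕ : supp(F) ⊆ [x, x+d] or supp(F^⊥) ⊆ [x, x+d]}, where F^⊥ = {W^⊥ : W ∈ F}. Then m_F ≤ (n - d)/2. -/
open Module

/-- Orthogonal complement with respect to the standard bilinear form. -/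
def stdPerp {K : Type*} [Field K] {n : ℕ} (U : Submodule K (Fin n → K)) :
    Submodule K (Fin n → K) where
  carrier := {v | ∀ u ∈ U, ∑ i, v i * u i = 0}
  zero_mem' := by intro u hu; simp
  add_mem' := by
    intro a b ha hb u hu
    simpa [add_mul, Finset.sum_add_distrib] using by
      rw [ha u hu, hb u hu]; ring
  smul_mem' := by
    intro c a ha u hu
    simp only [Pi.smul_apply, smul_eq_mul, mul_assoc, ← Finset.mul_sum]
    rw [ha u hu, mul_zero]

open Matrix

lemma dotProductBilin_nondegenerate (K : Type*) [Field K] (ι : Type*) [Fintype ι] :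
    (dotProductBilin K K : LinearMap.BilinForm K (ι → K)).Nondegenerate :=
  ⟨fun x hx => dotProduct_eq_zero x hx,
    fun y hy => dotProduct_eq_zero y fun x => by rw [dotProduct_comm]; exact hy x⟩

lemma stdPerp_eq_orthogonal {K : Type*} [Field K] {n : ℕ} (U : Submodule K (Fin n → K)) :
    stdPerp U = LinearMap.BilinForm.orthogonal (dotProductBilin K K) U := by
  ext v
  simp only [LinearMap.BilinForm.mem_orthogonal_iff, dotProductBilin_apply_apply,
    dotProduct_comm _ v]
  rfl

lemma finrank_stdPerp {K : Type*} [Field K] {n : ℕ} (U : Submodule K (Fin n → K)) :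
    finrank K (stdPerp U) = n - finrank K U := by
  rw [stdPerp_eq_orthogonal,
    LinearMap.BilinForm.finrank_orthogonal (dotProductBilin_nondegenerate K (Fin n)),
    finrank_fin_fun]

section SubspaceDist

variable {K V : Type*} [DivisionRing K] [AddCommGroup V] [Module K V]

noncomputable def subspaceDist (A B : Submodule K V) : ℕ :=
  finrank K A + finrank K B - 2 * finrank K ↥(A ⊓ B)

lemma finrank_le_subspaceDist_add [FiniteDimensional K V] (A B : Submodule K V) :
    finrank K A ≤ subspaceDist A B + finrank K B := by
  have := Submodule.finrank_mono (inf_le_right : A ⊓ B ≤ B)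
  unfold subspaceDist
  omega

lemma subspaceDist_le_finrank [FiniteDimensional K V] (A B : Submodule K V) :
    subspaceDist A B ≤ finrank K V := by
  have := Submodule.finrank_sup_add_finrank_inf_eq A B
  have := Submodule.finrank_le (A ⊔ B)
  unfold subspaceDist
  omega

lemma exists_finrank_mem_Icc [FiniteDimensional K V] {𝓕 : Set (Submodule K V)}
    (h𝓕 : 𝓕.Nonempty) {d : ℕ} (hdiam : ∀ A ∈ 𝓕, ∀ B ∈ 𝓕, subspaceDist A B ≤ d) :
    ∃ m, ∀ A ∈ 𝓕, finrank K A ∈ Set.Icc m (m + d) := by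
  let f := fun A : Submodule K V => finrank K A
  set B := Function.argminOn f 𝓕 h𝓕
  have hB : B ∈ 𝓕 := Function.argminOn_mem f 𝓕 h𝓕
  refine ⟨finrank K B, fun A hA => ⟨Function.argminOn_le f 𝓕 hA, ?_⟩⟩
  have := finrank_le_subspaceDist_add A B
  have := hdiam A hA B hB
  omega

end SubspaceDist

lemma finrank_stdPerp_mem_Icc {K : Type*} [Field K] {n m d : ℕ} {A : Submodule K (Fin n → K)}
    (hA : finrank K A ∈ Set.Icc m (m + d)) :
    finrank K (stdPerp A) ∈ Set.Icc (n - (m + d)) (n - (m + d) + d) := by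
  rw [finrank_stdPerp]
  obtain ⟨h₁, h₂⟩ := hA
  constructor <;> omega

theorem min_support_le_general {K : Type*} [Field K]
    (n d : ℕ)
    (𝓕 : Set (Submodule K (Fin n → K)))
    (hdiam : ∀ A ∈ 𝓕, ∀ B ∈ 𝓕,
      finrank K ↥A + finrank K ↥B - 2 * finrank K ↥(A ⊓ B) ≤ d)
    (hdiam' : ∃ A ∈ 𝓕, ∃ B ∈ 𝓕,
      finrank K ↥A + finrank K ↥B - 2 * finrank K ↥(A ⊓ B) = d) :
    2 * sInf {x : ℕ |
        (∀ A ∈ 𝓕, finrank K ↥A ∈ Set.Icc x (x + d)) ∨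
        (∀ A ∈ 𝓕, finrank K ↥(stdPerp A) ∈ Set.Icc x (x + d))} + d ≤ n := by
  obtain ⟨A₀, hA₀, B₀, -, hd⟩ := hdiam'
  have hdn : d ≤ n := hd ▸ (subspaceDist_le_finrank A₀ B₀).trans_eq (finrank_fin_fun K)
  obtain ⟨m, hm⟩ := exists_finrank_mem_Icc ⟨A₀, hA₀⟩ hdiam
  set S := {x : ℕ | (∀ A ∈ 𝓕, finrank K ↥A ∈ Set.Icc x (x + d)) ∨
    (∀ A ∈ 𝓕, finrank K ↥(stdPerp A) ∈ Set.Icc x (x + d))}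
  -- `m` witnesses the first alternative and `n - (m + d)` the second; they sum to at most `n - d`.
  by_cases hsmall : 2 * m + d ≤ n
  · have : sInf S ≤ m := Nat.sInf_le (Or.inl hm)
    omega
  · have : sInf S ≤ n - (m + d) :=
      Nat.sInf_le (Or.inr fun A hA => finrank_stdPerp_mem_Icc (hm A hA))
    omega

/-- If `diam(𝓕) = d` then
`m_𝓕 := min {x : supp(𝓕) ⊆ [x, x+d] or supp(𝓕^⊥) ⊆ [x, x+d]}` is at most `(n-d)/2`. -/
theorem min_support_le {K : Type*} [Field K] [Fintype K]
    (q n d : ℕ) (hq : Fintype.card K = q) (hpp : IsPrimePow q)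
    (𝓕 : Set (Submodule K (Fin n → K)))
    (hdiam : ∀ A ∈ 𝓕, ∀ B ∈ 𝓕,
      finrank K ↥A + finrank K ↥B - 2 * finrank K ↥(A ⊓ B) ≤ d)
    (hdiam' : ∃ A ∈ 𝓕, ∃ B ∈ 𝓕,
      finrank K ↥A + finrank K ↥B - 2 * finrank K ↥(A ⊓ B) = d) :
    2 * sInf {x : ℕ |
        (∀ A ∈ 𝓕, finrank K ↥A ∈ Set.Icc x (x + d)) ∨
        (∀ A ∈ 𝓕, finrank K ↥(stdPerp A) ∈ Set.Icc x (x + d))} + d ≤ n :=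
  min_support_le_general n d 𝓕 hdiam hdiam'
end

section
/- Let n = d + 1 and let F be a family of subspaces of 𝔽_q^n whose pairwise Δ-distances are at most d, with d = 2t even. Then |F| ≤ Σ_{i=0}^{t} [n choose i]_q. -/
open Module

/-- The Gaussian binomial coefficient, via the `q`-Pascal recurrence. -/
def gbinom (q : ℕ) : ℕ → ℕ → ℕ
  | _, 0 => 1
  | 0, _ + 1 => 0
  | n + 1, k + 1 => gbinom q n k + q ^ (k + 1) * gbinom q n (k + 1)

/-!
Complementary subspaces are at distance `n > d`, so no two members of `𝓕` are complementary.
Fix `j ≤ t` and join every `j`-dimensional subspace to each of its complements, which are the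
`(n - j)`-dimensional subspaces meeting it trivially. Every vertex of this bipartite graph has
exactly `q ^ (j * (n - j))` neighbours, and the neighbours of the `(n - j)`-dimensional members
of `𝓕` avoid its `j`-dimensional members; double counting then bounds the members of dimension
`j` or `n - j` by `[n choose j]_q`. Since `n = 2t + 1`, the pairs `{j, n - j}` with `j ≤ t`
exhaust all dimensions.

The subspace count `[n choose k]_q` follows the `q`-Pascal rule: for a line `L`, a
`(k + 1)`-dimensional subspace either contains `L`, or it is one of the `q ^ (k + 1)`
complements of `L` in a `(k + 2)`-dimensional subspace containing `L`.
-/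

open Finset

theorem Nat.card_eq_card_subtype_and_add_card_subtype_not_and {α : Type*} [Finite α]
    (p q : α → Prop) :
    Nat.card {a // q a} = Nat.card {a // p a ∧ q a} + Nat.card {a // ¬ p a ∧ q a} := by
  classical
  rw [← Nat.card_sum]
  refine Nat.card_congr ((Equiv.sumCompl fun a : {a // q a} => p a).symm.trans ?_)
  exact Equiv.sumCongr
    ((Equiv.subtypeSubtypeEquivSubtypeInter q p).trans (Equiv.subtypeEquivRight fun _ => and_comm))
    ((Equiv.subtypeSubtypeEquivSubtypeInter q (¬ p ·)).trans
      (Equiv.subtypeEquivRight fun _ => and_comm))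

theorem Nat.card_eq_mul_of_forall_card_fiber_eq {α β : Type*} [Finite α] [Finite β]
    (f : α → β) {c : ℕ} (h : ∀ b, Nat.card {a // f a = b} = c) :
    Nat.card α = Nat.card β * c := by
  have := Fintype.ofFinite β
  rw [← Nat.card_congr (Equiv.sigmaFiberEquiv f), Nat.card_sigma]
  simp [h, Nat.card_eq_fintype_card]

theorem Finset.card_add_card_le_of_forall_not_rel {α β : Type*} (r : α → β → Prop)
    [∀ a b, Decidable (r a b)] {S s : Finset α} {u : Finset β} {D : ℕ} (hD : 0 < D)
    (hsS : s ⊆ S) (hsu : ∀ a ∈ s, ∀ b ∈ u, ¬ r a b)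
    (hu : ∀ b ∈ u, D ≤ #(S.bipartiteBelow r b))
    (hS : ∀ a ∈ S, #(u.bipartiteAbove r a) ≤ D) :
    #s + #u ≤ #S := by
  classical
  have hdouble : #u * D ≤ #(S \ s) * D := by
    refine card_mul_le_card_mul' r (fun b hb => (hu b hb).trans (card_le_card fun a ha => ?_))
      fun a ha => hS a (mem_sdiff.1 ha).1
    rw [mem_bipartiteBelow] at ha ⊢
    exact ⟨mem_sdiff.2 ⟨ha.1, fun has => hsu a has b hb ha.2⟩, ha.2⟩
  have := Nat.le_of_mul_le_mul_right hdouble hD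
  rw [card_sdiff_of_subset hsS] at this
  have := card_le_card hsS
  omega

theorem Submodule.natCard_le_and {R M : Type*} [Ring R] [AddCommGroup M] [Module R M]
    (N : Submodule R M) (P : Submodule R M → Prop) :
    Nat.card {W : Submodule R M // W ≤ N ∧ P W} =
      Nat.card {W : Submodule R N // P (W.map N.subtype)} :=
  Nat.card_congr ((Equiv.subtypeSubtypeEquivSubtypeInter (· ≤ N) P).symm.trans
    (N.mapIic.toEquiv.subtypeEquiv fun _ => Iff.rfl).symm)

section Complements

variable {K V : Type*} [Field K] [Fintype K] [AddCommGroup V] [Module K V]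
  [FiniteDimensional K V]

theorem Submodule.natCard_isCompl (p : Submodule K V) :
    Nat.card {q : Submodule K V // IsCompl p q} =
      Fintype.card K ^ (finrank K p * (finrank K V - finrank K p)) := by
  obtain ⟨c, hc⟩ := p.exists_isCompl
  -- a projection onto `p` is the identity on `p` and arbitrary on the complement `c`
  let proj : {f : V →ₗ[K] p // ∀ x : p, f x = x} ≃ (c →ₗ[K] p) :=
    { toFun f := f.1.domRestrict c
      invFun g := ⟨LinearMap.ofIsCompl hc LinearMap.id g, LinearMap.ofIsCompl_apply_left hc⟩
      left_inv f := Subtype.ext (LinearMap.ofIsCompl_eq hc (fun x => (f.2 x).symm) fun _ => rfl)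
      right_inv g := LinearMap.ext (LinearMap.ofIsCompl_apply_right hc) }
  rw [Nat.card_congr (p.isComplEquivProj.trans proj), Module.natCard_eq_pow_finrank (K := K),
    Nat.card_eq_fintype_card, finrank_linearMap, ← Submodule.finrank_add_eq_of_isCompl hc,
    Nat.add_sub_cancel_left, Nat.mul_comm]

theorem Submodule.natCard_disjoint_sup_eq {L M : Submodule K V} (hLM : L ≤ M) :
    Nat.card {W : Submodule K V // W ≤ M ∧ Disjoint L W ∧ L ⊔ W = M} =
      Fintype.card K ^ (finrank K L * (finrank K M - finrank K L)) := by
  have hmap : (L.comap M.subtype).map M.subtype = L := by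
    rw [Submodule.map_comap_subtype, inf_eq_right.mpr hLM]
  have hcompl (W : Submodule K M) : IsCompl (L.comap M.subtype) W ↔
      Disjoint L (W.map M.subtype) ∧ L ⊔ W.map M.subtype = M := by
    rw [M.mapIic.isCompl_iff, Set.Iic.isCompl_iff, Submodule.coe_mapIic_apply,
      Submodule.coe_mapIic_apply, hmap]
  rw [natCard_le_and, ← Nat.card_congr (Equiv.subtypeEquivRight hcompl), natCard_isCompl,
    ← finrank_map_subtype_eq, hmap]

end Complements

section Lines

variable {K V : Type*} [Field K] [AddCommGroup V] [Module K V] [FiniteDimensional K V] {v : V}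

theorem Submodule.finrank_span_singleton_sup (hv : v ≠ 0) {W : Submodule K V}
    (hW : Disjoint (K ∙ v) W) : finrank K ↥(K ∙ v ⊔ W) = finrank K W + 1 := by
  have := finrank_sup_add_finrank_inf_eq (K ∙ v) W
  rw [hW.eq_bot, finrank_bot, finrank_span_singleton hv] at this
  omega

theorem Submodule.natCard_span_singleton_le_finrank_succ (hv : v ≠ 0) {H : Submodule K V}
    (hH : IsCompl H (K ∙ v)) (k : ℕ) :
    Nat.card {W : Submodule K V // K ∙ v ≤ W ∧ finrank K W = k + 1} =
      Nat.card {U : Submodule K V // U ≤ H ∧ finrank K U = k} := by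
  refine (Nat.card_congr ?_).symm
  refine (Equiv.subtypeSubtypeEquivSubtypeInter (· ≤ H) (finrank K · = k)).symm.trans ?_
  refine (hH.IicOrderIsoIci.toEquiv.subtypeEquiv fun U => ?_).trans
    (Equiv.subtypeSubtypeEquivSubtypeInter (K ∙ v ≤ ·) (finrank K · = k + 1))
  change _ ↔ finrank K ↥(U.1 ⊔ K ∙ v) = k + 1
  rw [sup_comm, finrank_span_singleton_sup hv (hH.disjoint.symm.mono_right U.2)]
  omega

theorem Submodule.natCard_not_span_singleton_le [Fintype K] (hv : v ≠ 0) (k : ℕ) :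
    Nat.card {W : Submodule K V // ¬ K ∙ v ≤ W ∧ finrank K W = k + 1} =
      Nat.card {M : Submodule K V // K ∙ v ≤ M ∧ finrank K M = k + 1 + 1} *
        Fintype.card K ^ (k + 1) := by
  have : Finite V := Module.finite_of_finite K
  have hdisj (W : Submodule K V) : ¬ K ∙ v ≤ W ↔ Disjoint (K ∙ v) W := by
    rw [disjoint_comm, disjoint_span_singleton' hv, span_singleton_le_iff_mem]
  let f (W : {W : Submodule K V // ¬ K ∙ v ≤ W ∧ finrank K W = k + 1}) :
      {M : Submodule K V // K ∙ v ≤ M ∧ finrank K M = k + 1 + 1} :=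
    ⟨K ∙ v ⊔ W, le_sup_left,
      by rw [finrank_span_singleton_sup hv ((hdisj _).1 W.2.1), W.2.2]⟩
  refine Nat.card_eq_mul_of_forall_card_fiber_eq f fun M => ?_
  have hcount := natCard_disjoint_sup_eq M.2.1
  rw [finrank_span_singleton hv, M.2.2, one_mul, Nat.add_sub_cancel] at hcount
  rw [← hcount]
  refine Nat.card_congr ((Equiv.subtypeSubtypeEquivSubtypeExists _ _).trans
    (Equiv.subtypeEquivRight fun W => ?_))
  simp only [f, Subtype.ext_iff, hdisj]
  constructor
  · rintro ⟨⟨hd, -⟩, hsup⟩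
    exact ⟨hsup ▸ le_sup_right, hd, hsup⟩
  · rintro ⟨-, hd, hsup⟩
    refine ⟨⟨hd, ?_⟩, hsup⟩
    have := finrank_span_singleton_sup hv hd
    rw [hsup, M.2.2] at this
    omega

end Lines

theorem Submodule.natCard_finrank_eq_zero {K V : Type*} [DivisionRing K] [AddCommGroup V]
    [Module K V] [FiniteDimensional K V] :
    Nat.card {W : Submodule K V // finrank K W = 0} = 1 := by
  rw [Nat.card_congr (Equiv.subtypeEquivRight fun _ => Submodule.finrank_eq_zero), Nat.card_unique]

theorem Submodule.natCard_finrank_eq_gbinom {K V : Type*} [Field K] [Fintype K] [AddCommGroup V]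
    [Module K V] [FiniteDimensional K V] (k : ℕ) :
    Nat.card {W : Submodule K V // finrank K W = k} = gbinom (Fintype.card K) (finrank K V) k := by
  obtain ⟨n, hn⟩ : ∃ n, finrank K V = n := ⟨_, rfl⟩
  induction n generalizing V k with
  | zero =>
    cases k with
    | zero => rw [natCard_finrank_eq_zero, hn, gbinom]
    | succ k =>
      rw [hn, gbinom, Nat.card_eq_zero]
      exact .inl ⟨fun W => by have := W.1.finrank_le; omega⟩
  | succ n ih =>
    cases k with
    | zero => rw [natCard_finrank_eq_zero, hn, gbinom]
    | succ k =>
      have : Nontrivial V := Module.nontrivial_of_finrank_eq_succ hn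
      have : Finite V := Module.finite_of_finite K
      obtain ⟨v, hv⟩ := exists_ne (0 : V)
      obtain ⟨H, hH⟩ := (K ∙ v).exists_isCompl
      have hHn : finrank K H = n := by
        have := finrank_add_eq_of_isCompl hH
        rw [finrank_span_singleton hv] at this
        omega
      rw [hn, Nat.card_eq_card_subtype_and_add_card_subtype_not_and (K ∙ v ≤ ·),
        natCard_not_span_singleton_le hv, natCard_span_singleton_le_finrank_succ hv hH.symm,
        natCard_span_singleton_le_finrank_succ hv hH.symm, natCard_le_and, natCard_le_and]
      simp only [finrank_map_subtype_eq]
      rw [ih _ hHn, ih _ hHn, hHn, gbinom, Nat.mul_comm]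

theorem Submodule.card_filter_finrank_eq_add_card_filter_finrank_eq_sub_le {K V : Type*} [Field K]
    [Fintype K] [AddCommGroup V] [Module K V] [FiniteDimensional K V]
    (𝓕 : Finset (Submodule K V))
    (h𝓕 : ∀ A ∈ 𝓕, ∀ B ∈ 𝓕, ¬ IsCompl A B) {j : ℕ} (hj : j ≤ finrank K V) :
    #(𝓕.filter fun A : Submodule K V => finrank K A = j) +
      #(𝓕.filter fun A : Submodule K V => finrank K A = finrank K V - j) ≤
      gbinom (Fintype.card K) (finrank K V) j := by
  classical
  have : Finite V := Module.finite_of_finite K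
  have := Fintype.ofFinite (Submodule K V)
  have hcompl (A : Submodule K V) : #{B | IsCompl A B} =
      Fintype.card K ^ (finrank K A * (finrank K V - finrank K A)) := by
    rw [← natCard_isCompl, Nat.card_eq_fintype_card, Fintype.card_subtype]
  rw [← natCard_finrank_eq_gbinom, Nat.card_eq_fintype_card, Fintype.card_subtype]
  refine card_add_card_le_of_forall_not_rel IsCompl (D := Fintype.card K ^ (j * (finrank K V - j)))
    (pow_pos Fintype.card_pos _) (filter_subset_filter _ (subset_univ 𝓕))
    (fun A hA B hB => h𝓕 A (mem_filter.1 hA).1 B (mem_filter.1 hB).1) (fun B hB => ?_)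
    fun A hA => ?_
  · have hBdim := (mem_filter.1 hB).2
    calc Fintype.card K ^ (j * (finrank K V - j)) = #{A | IsCompl B A} := by
          rw [hcompl, hBdim, Nat.sub_sub_self hj, Nat.mul_comm]
      _ ≤ _ := card_le_card fun A hA => by
          have hBA := (mem_filter.1 hA).2
          have := finrank_add_eq_of_isCompl hBA
          exact (mem_bipartiteBelow _).2 ⟨mem_filter.2 ⟨mem_univ A, by omega⟩, hBA.symm⟩
  · rw [← (mem_filter.1 hA).2, ← hcompl]
    exact card_le_card (filter_subset_filter _ (subset_univ _))

theorem isodiametric_succ_even_general {K : Type*} [Field K] [Fintype K]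
    (q n d t : ℕ) (hq : Fintype.card K = q)
    (hn : n = d + 1) (hd : d = 2 * t)
    (𝓕 : Finset (Submodule K (Fin n → K)))
    (hdiam : ∀ A ∈ 𝓕, ∀ B ∈ 𝓕,
      finrank K ↥A + finrank K ↥B - 2 * finrank K ↥(A ⊓ B) ≤ d) :
    𝓕.card ≤ ∑ i ∈ Finset.range (t + 1), gbinom q n i := by
  subst hq hd
  have hV : finrank K (Fin n → K) = n := by simp
  have hcompl : ∀ A ∈ 𝓕, ∀ B ∈ 𝓕, ¬ IsCompl A B := fun A hA B hB h => by
    have := hdiam A hA B hB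
    rw [h.inf_eq_bot, finrank_bot, Submodule.finrank_add_eq_of_isCompl h, hV] at this
    omega
  have hle (A : Submodule K (Fin n → K)) : finrank K A ≤ n := A.finrank_le.trans_eq hV
  -- group the members of `𝓕` by the pair of dimensions `{j, n - j}`, with `j ≤ t`
  rw [card_eq_sum_card_fiberwise (f := fun A : Submodule K _ => min (finrank K A) (n - finrank K A))
    (t := range (t + 1)) fun A _ => mem_range.2 (by have := hle A; dsimp only; omega)]
  refine sum_le_sum fun j hj => ?_
  have hjn : j ≤ finrank K (Fin n → K) := by rw [hV, hn]; have := mem_range.1 hj; omega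
  calc #(𝓕.filter fun A : Submodule K (Fin n → K) => min (finrank K A) (n - finrank K A) = j)
      ≤ #((𝓕.filter fun A : Submodule K (Fin n → K) => finrank K A = j) ∪
          𝓕.filter fun A : Submodule K (Fin n → K) => finrank K A = n - j) := by
        rw [← filter_or]
        exact card_le_card (monotone_filter_right _ fun A _ _ => by have := hle A; omega)
    _ ≤ _ := card_union_le _ _
    _ ≤ _ := by
      have h := Submodule.card_filter_finrank_eq_add_card_filter_finrank_eq_sub_le 𝓕 hcompl hjn
      rwa [hV] at h

/-- Isodiametric inequality for `n = d + 1`, `d = 2t` even. -/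
theorem isodiametric_succ_even {K : Type*} [Field K] [Fintype K]
    (q n d t : ℕ) (hq : Fintype.card K = q) (hpp : IsPrimePow q)
    (hn : n = d + 1) (hd : d = 2 * t)
    (𝓕 : Finset (Submodule K (Fin n → K)))
    (hdiam : ∀ A ∈ 𝓕, ∀ B ∈ 𝓕,
      finrank K ↥A + finrank K ↥B - 2 * finrank K ↥(A ⊓ B) ≤ d) :
    𝓕.card ≤ ∑ i ∈ Finset.range (t + 1), gbinom q n i :=
  isodiametric_succ_even_general q n d t hq hn hd 𝓕 hdiam
end

section
/- Let n = d+1 with d = 2t, k ≤ n/2, and let F be a family of subspaces of 𝔽_q^n with diam(F) ≤ d in the metric Δ. Then |F(k)| + |F(n-k)| ≤ [n choose k]_q, where F(j) denotes the members of F of dimension j. -/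
open Module

set_option linter.unusedSectionVars false
set_option maxHeartbeats 1000000

section Helpers

universe u

variable {K : Type*} [Field K] [Fintype K]

lemma card_isCompl {V : Type*} [AddCommGroup V] [Module K V] [FiniteDimensional K V]
    (p : Submodule K V) :
    Nat.card {W : Submodule K V // IsCompl p W} =
      Fintype.card K ^ ((finrank K V - finrank K p) * finrank K p) := by
  classical
  obtain ⟨q0, hq0⟩ := Submodule.exists_isCompl p
  set f₀ : {f : V →ₗ[K] p // ∀ x : p, f x = x} := p.isComplEquivProj ⟨q0, hq0⟩
  let e2 : {f : V →ₗ[K] p // ∀ x : p, f x = x} ≃ {g : V →ₗ[K] p // ∀ x : p, g x = 0} :=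
    { toFun := fun f => ⟨f.1 - f₀.1, fun x => by simp [f.2 x, f₀.2 x]⟩
      invFun := fun g => ⟨g.1 + f₀.1, fun x => by simp [g.2 x, f₀.2 x]⟩
      left_inv := fun f => by ext x; simp
      right_inv := fun g => by ext x; simp }
  let e3 : {g : V →ₗ[K] p // ∀ x : p, g x = 0} ≃ ((V ⧸ p) →ₗ[K] p) :=
    { toFun := fun g => p.liftQ g.1 (fun x hx => by simpa using g.2 ⟨x, hx⟩)
      invFun := fun h => ⟨h ∘ₗ p.mkQ, fun x => by
        have hx : (Submodule.Quotient.mk (x : V) : V ⧸ p) = 0 :=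
          (Submodule.Quotient.mk_eq_zero p).mpr x.2
        simp [hx]⟩
      left_inv := fun g => by ext x; simp
      right_inv := fun h => by ext x; simp }
  rw [Nat.card_congr ((p.isComplEquivProj.trans e2).trans e3)]
  haveI : Finite V := Module.finite_iff_finite (R := K) |>.mp inferInstance
  haveI : Finite (V ⧸ p) := Finite.of_surjective _ (Submodule.Quotient.mk_surjective p)
  haveI : Finite ((V ⧸ p) →ₗ[K] p) :=
    Finite.of_injective (fun f => (f : (V ⧸ p) → p)) DFunLike.coe_injective
  haveI : Fintype ((V ⧸ p) →ₗ[K] p) := Fintype.ofFinite _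
  rw [Nat.card_eq_fintype_card, card_eq_pow_finrank (K := K), Module.finrank_linearMap]
  congr 2
  have := Submodule.finrank_quotient_add_finrank p
  omega

lemma card_compl_in {V : Type u} [AddCommGroup V] [Module K V] [FiniteDimensional K V]
    (p P : Submodule K V) (hpP : p ≤ P) :
    Nat.card {W : Submodule K V // W ⊓ p = ⊥ ∧ W ⊔ p = P} =
      Fintype.card K ^ ((finrank K P - finrank K p) * finrank K p) := by
  classical
  have hinj : Function.Injective P.subtype := Subtype.coe_injective
  set p' : Submodule K P := Submodule.comap P.subtype p with hp'
  have hmapp' : Submodule.map P.subtype p' = p := by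
    rw [Submodule.map_comap_subtype, inf_eq_right.mpr hpP]
  let e : {W' : Submodule K P // IsCompl p' W'} ≃
      {W : Submodule K V // W ⊓ p = ⊥ ∧ W ⊔ p = P} :=
    { toFun := fun W' => ⟨Submodule.map P.subtype W'.1, by
        constructor
        · rw [← hmapp', ← Submodule.map_inf _ hinj, inf_comm,
            W'.2.inf_eq_bot, Submodule.map_bot]
        · rw [← hmapp', ← Submodule.map_sup, sup_comm, W'.2.sup_eq_top,
            Submodule.map_top, Submodule.range_subtype]⟩
      invFun := fun W => ⟨Submodule.comap P.subtype W.1, by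
        have hWP : W.1 ≤ P := le_trans le_sup_left (le_of_eq W.2.2)
        have hmapW : Submodule.map P.subtype (Submodule.comap P.subtype W.1) = W.1 := by
          rw [Submodule.map_comap_subtype, inf_eq_right.mpr hWP]
        constructor
        · rw [disjoint_iff]
          apply Submodule.map_injective_of_injective hinj
          rw [Submodule.map_inf _ hinj, hmapp', hmapW, inf_comm, W.2.1,
            Submodule.map_bot]
        · rw [codisjoint_iff]
          apply Submodule.map_injective_of_injective hinj
          rw [Submodule.map_sup, hmapp', hmapW, sup_comm, W.2.2,
            Submodule.map_top, Submodule.range_subtype]⟩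
      left_inv := fun W' => by
        ext1
        simp only
        rw [Submodule.comap_map_eq, Submodule.ker_subtype, sup_bot_eq]
      right_inv := fun W => by
        have hWP : W.1 ≤ P := le_trans le_sup_left (le_of_eq W.2.2)
        ext1
        simp only
        rw [Submodule.map_comap_subtype, inf_eq_right.mpr hWP] }
  rw [← Nat.card_congr e, card_isCompl]
  have h' : finrank K p' = finrank K p := (Submodule.comapSubtypeEquivOfLe hpP).finrank_eq
  rw [h']

lemma finite_submodule (V : Type u) [AddCommGroup V] [Module K V] [FiniteDimensional K V] :
    Finite (Submodule K V) := by
  haveI : Finite V := Module.finite_iff_finite (R := K) |>.mp inferInstance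
  exact Finite.of_injective (fun p => (p : Set V)) SetLike.coe_injective

/-- rank-nullity for the restriction of the quotient map. -/
lemma finrank_map_mkQ {V : Type u} [AddCommGroup V] [Module K V] [FiniteDimensional K V]
    (L W : Submodule K V) :
    finrank K ↥(Submodule.map L.mkQ W) + finrank K ↥(W ⊓ L) = finrank K ↥W := by
  have hker : LinearMap.ker (L.mkQ.domRestrict W) = Submodule.comap W.subtype (W ⊓ L) := by
    ext x
    simp [LinearMap.mem_ker, Submodule.Quotient.mk_eq_zero, x.2]
  have h1 := LinearMap.finrank_range_add_finrank_ker (L.mkQ.domRestrict W)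
  rw [LinearMap.range_domRestrict, hker] at h1
  have h2 : finrank K ↥(Submodule.comap W.subtype (W ⊓ L)) = finrank K ↥(W ⊓ L) :=
    (Submodule.comapSubtypeEquivOfLe inf_le_left).finrank_eq
  rw [h2] at h1
  exact h1

lemma le_comap_mkQ {V : Type u} [AddCommGroup V] [Module K V]
    (L : Submodule K V) (W' : Submodule K (V ⧸ L)) : L ≤ Submodule.comap L.mkQ W' := by
  intro x hx
  show L.mkQ x ∈ W'
  rw [Submodule.mkQ_apply, (Submodule.Quotient.mk_eq_zero L).mpr hx]
  exact W'.zero_mem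

lemma card_rank_zero {V : Type u} [AddCommGroup V] [Module K V] [FiniteDimensional K V] :
    Nat.card {W : Submodule K V // finrank K W = 0} = 1 := by
  rw [Nat.card_eq_one_iff_unique]
  constructor
  · constructor
    intro a b
    ext1
    rw [Submodule.finrank_eq_zero.mp a.2, Submodule.finrank_eq_zero.mp b.2]
  · exact ⟨⟨⊥, finrank_bot K V⟩⟩

lemma card_subspaces : ∀ (n k : ℕ) (V : Type u) [AddCommGroup V] [Module K V]
    [FiniteDimensional K V], finrank K V = n →
    Nat.card {W : Submodule K V // finrank K W = k} = gbinom (Fintype.card K) n k := by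
  intro n
  induction n with
  | zero =>
    intro k V _ _ _ hV
    match k with
    | 0 => exact card_rank_zero
    | k + 1 =>
      rw [show gbinom (Fintype.card K) 0 (k+1) = 0 from rfl]
      have : IsEmpty {W : Submodule K V // finrank K W = k + 1} := by
        constructor
        rintro ⟨W, hW⟩
        have : finrank K ↥W ≤ finrank K V := Submodule.finrank_le W
        omega
      simp [Nat.card_of_isEmpty]
  | succ n ih =>
    intro k V _ _ _ hV
    haveI := finite_submodule (K := K) V
    match k with
    | 0 => exact card_rank_zero
    | k + 1 =>
      classical
      -- pick a line L
      haveI : Nontrivial V := Module.finrank_pos_iff (R := K) |>.mp (by omega)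
      obtain ⟨v, hv⟩ := exists_ne (0 : V)
      set L : Submodule K V := K ∙ v with hLdef
      have hL : finrank K L = 1 := finrank_span_singleton hv
      have hLbot : L ≠ ⊥ := by
        intro h
        rw [h, finrank_bot] at hL
        omega
      have hQrank : finrank K (V ⧸ L) = n := by
        have := Submodule.finrank_quotient_add_finrank L
        omega
      haveI := finite_submodule (K := K) (V ⧸ L)
      -- inf with L is ⊥ or L
      have hinfL : ∀ W : Submodule K V, ¬ L ≤ W → W ⊓ L = ⊥ := by
        intro W hW
        by_contra hne
        have hle : L ≤ W ⊓ L := by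
          have h1 : 0 < finrank K ↥(W ⊓ L) := by
            rcases Nat.eq_zero_or_pos (finrank K ↥(W ⊓ L)) with h | h
            · exact absurd (Submodule.finrank_eq_zero.mp h) hne
            · exact h
          have := Submodule.eq_of_le_of_finrank_le (inf_le_right : W ⊓ L ≤ L) (by omega)
          rw [this]
        exact hW (le_trans hle inf_le_left)
      -- split by whether W contains L
      set S := {W : Submodule K V // finrank K W = k + 1}
      have hsplit : Nat.card S =
          Nat.card {W : Submodule K V // finrank K W = k + 1 ∧ L ≤ W} +
          Nat.card {W : Submodule K V // finrank K W = k + 1 ∧ ¬ L ≤ W} := by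
        rw [← Nat.card_sum]
        apply Nat.card_congr
        exact ((Equiv.sumCompl (fun W : S => L ≤ W.1)).symm.trans
          (Equiv.sumCongr
            (Equiv.subtypeSubtypeEquivSubtypeInter
              (fun W : Submodule K V => finrank K ↥W = k + 1) (fun W => L ≤ W))
            (Equiv.subtypeSubtypeEquivSubtypeInter
              (fun W : Submodule K V => finrank K ↥W = k + 1) (fun W => ¬ L ≤ W))))
      -- Part 1
      have hpart1 : Nat.card {W : Submodule K V // finrank K W = k + 1 ∧ L ≤ W} =
          gbinom (Fintype.card K) n k := by
        rw [← ih k (V ⧸ L) hQrank]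
        apply Nat.card_congr
        refine
          { toFun := fun W => ⟨Submodule.map L.mkQ W.1, ?_⟩
            invFun := fun W' => ⟨Submodule.comap L.mkQ W'.1, ?_, ?_⟩
            left_inv := ?_
            right_inv := ?_ }
        · have h1 := finrank_map_mkQ L W.1
          rw [inf_eq_right.mpr W.2.2, hL, W.2.1] at h1
          omega
        · have h1 := finrank_map_mkQ L (Submodule.comap L.mkQ W'.1)
          have hmc : Submodule.map L.mkQ (Submodule.comap L.mkQ W'.1) = W'.1 := by
            rw [Submodule.map_comap_eq, Submodule.range_mkQ, top_inf_eq]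
          have hLle : L ≤ Submodule.comap L.mkQ W'.1 := le_comap_mkQ L W'.1
          rw [hmc, inf_eq_right.mpr hLle, hL, W'.2] at h1
          omega
        · exact le_comap_mkQ L W'.1
        · intro W
          ext1
          simp only
          rw [Submodule.comap_map_eq, Submodule.ker_mkQ, sup_eq_left.mpr W.2.2]
        · intro W'
          ext1
          simp only
          rw [Submodule.map_comap_eq, Submodule.range_mkQ, top_inf_eq]
      have mapLbot : Submodule.map L.mkQ L = ⊥ := by
        rw [eq_bot_iff, Submodule.map_le_iff_le_comap]
        intro x hx
        show L.mkQ x ∈ (⊥ : Submodule K (V ⧸ L))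
        rw [Submodule.mkQ_apply, (Submodule.Quotient.mk_eq_zero L).mpr hx]
        exact Submodule.zero_mem ⊥
      have hpart2 : Nat.card {W : Submodule K V // finrank K ↥W = k + 1 ∧ ¬ L ≤ W} =
          Fintype.card K ^ (k + 1) * gbinom (Fintype.card K) n (k + 1) := by
        haveI : Fintype (Submodule K (V ⧸ L)) := Fintype.ofFinite _
        haveI : Fintype (Submodule K V) := Fintype.ofFinite _
        set B := {W : Submodule K V // finrank K ↥W = k + 1 ∧ ¬ L ≤ W} with hB
        have e := Equiv.sigmaFiberEquiv (fun W : B => Submodule.map L.mkQ W.1)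
        rw [← Nat.card_congr e]
        have hfiber : ∀ U : Submodule K (V ⧸ L),
            Nat.card {W : B // Submodule.map L.mkQ W.1 = U} =
            if finrank K ↥U = k + 1 then Fintype.card K ^ (k + 1) else 0 := by
          intro U
          by_cases hU : finrank K ↥U = k + 1
          · rw [if_pos hU]
            set P := Submodule.comap L.mkQ U with hP
            have hLP : L ≤ P := le_comap_mkQ L U
            have hmcP : Submodule.map L.mkQ P = U := by
              rw [hP, Submodule.map_comap_eq, Submodule.range_mkQ, top_inf_eq]
            have hPrank : finrank K ↥P = k + 2 := by
              have h1 := finrank_map_mkQ L P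
              rw [hmcP, inf_eq_right.mpr hLP, hL, hU] at h1
              omega
            have hcc := card_compl_in (K := K) L P hLP
            rw [hPrank, hL] at hcc
            have he : (k + 2 - 1) * 1 = k + 1 := by omega
            rw [he] at hcc
            rw [← hcc]
            apply Nat.card_congr
            refine (Equiv.subtypeSubtypeEquivSubtypeInter
                (fun W : Submodule K V => finrank K ↥W = k + 1 ∧ ¬ L ≤ W)
                (fun W => Submodule.map L.mkQ W = U)).trans
              (Equiv.subtypeEquivRight ?_)
            intro W
            constructor
            · rintro ⟨⟨hWk, hLW⟩, hmap⟩
              have hinf : W ⊓ L = ⊥ := hinfL W hLW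
              refine ⟨hinf, ?_⟩
              have h1 : Submodule.comap L.mkQ (Submodule.map L.mkQ (W ⊔ L)) = W ⊔ L := by
                rw [Submodule.comap_map_eq, Submodule.ker_mkQ, sup_assoc, sup_idem]
              have h2 : Submodule.map L.mkQ (W ⊔ L) = U := by
                rw [Submodule.map_sup, hmap, mapLbot, sup_bot_eq]
              rw [← h1, h2]
            · rintro ⟨hinf, hsup⟩
              have hfr : finrank K ↥W = k + 1 := by
                have h1 := Submodule.finrank_sup_add_finrank_inf_eq W L
                rw [hsup, hinf, hPrank, hL] at h1
                simp only [finrank_bot] at h1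
                omega
              have hnLW : ¬ L ≤ W := by
                intro h
                have h1 : L ≤ W ⊓ L := le_inf h le_rfl
                rw [hinf] at h1
                exact hLbot (le_bot_iff.mp h1)
              refine ⟨⟨hfr, hnLW⟩, ?_⟩
              have h2 : Submodule.map L.mkQ (W ⊔ L) = U := by
                rw [hsup, hmcP]
              rw [Submodule.map_sup, mapLbot, sup_bot_eq] at h2
              exact h2
          · rw [if_neg hU]
            have : IsEmpty {W : B // Submodule.map L.mkQ W.1 = U} := by
              constructor
              rintro ⟨⟨W, hWk, hLW⟩, hmap⟩
              have h1 := finrank_map_mkQ L W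
              rw [hinfL W hLW] at h1
              simp only [finrank_bot] at h1
              rw [hmap] at h1
              omega
            exact Nat.card_of_isEmpty
        rw [Nat.card_eq_fintype_card, Fintype.card_sigma]
        have hsum : ∀ U : Submodule K (V ⧸ L),
            Fintype.card {W : B // Submodule.map L.mkQ W.1 = U} =
            if finrank K ↥U = k + 1 then Fintype.card K ^ (k + 1) else 0 := by
          intro U
          rw [← Nat.card_eq_fintype_card, hfiber U]
        rw [Finset.sum_congr rfl (fun U _ => hsum U), ← Finset.sum_filter,
          Finset.sum_const, smul_eq_mul, ← Fintype.card_subtype,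
          ← Nat.card_eq_fintype_card, ih (k + 1) (V ⧸ L) hQrank, mul_comm]
      show Nat.card S = gbinom (Fintype.card K) (n + 1) (k + 1)
      rw [hsplit, hpart1, hpart2]
      rfl

end Helpers

/-- For `n = d + 1`, `d = 2t`, and a family `𝓕` of `Δ`-diameter at most `d`,
the layers of dimension `k` and `n - k` together have at most `[n choose k]_q`
members. -/
theorem layer_pair_bound {K : Type*} [Field K] [Fintype K]
    (q n d t k : ℕ) (hq : Fintype.card K = q) (hpp : IsPrimePow q)
    (hn : n = d + 1) (hd : d = 2 * t) (hk : 2 * k ≤ n)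
    (𝓕 : Finset (Submodule K (Fin n → K)))
    (hdiam : ∀ A ∈ 𝓕, ∀ B ∈ 𝓕,
      finrank K ↥A + finrank K ↥B - 2 * finrank K ↥(A ⊓ B) ≤ d) :
    (𝓕.filter fun A : Submodule K (Fin n → K) => finrank K ↥A = k).card +
      (𝓕.filter fun A : Submodule K (Fin n → K) => finrank K ↥A = n - k).card ≤ gbinom q n k := by
  classical
  subst hq
  set V := (Fin n → K) with hV
  have hVrank : finrank K V = n := Module.finrank_fin_fun K
  haveI := finite_submodule (K := K) V
  haveI : Fintype (Submodule K V) := Fintype.ofFinite _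
  set m := n - k with hm
  have hkn : k ≤ n := by omega
  have hmn : m ≤ n := by omega
  have hkm : k + m = n := by omega
  -- complements facts
  set E := Fintype.card K ^ (k * m) with hE
  have hcomplB : ∀ B : Submodule K V, finrank K B = m →
      Nat.card {W : Submodule K V // IsCompl B W} = E := by
    intro B hB
    rw [card_isCompl (K := K) B, hB, hVrank]
    have h1 : n - m = k := by omega
    rw [h1]
  have hcomplA : ∀ A : Submodule K V, finrank K A = k →
      Nat.card {W : Submodule K V // IsCompl A W} = E := by
    intro A hA
    rw [card_isCompl (K := K) A, hA, hVrank]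
    have h1 : n - k = m := by omega
    rw [h1, mul_comm]
  have hiscompl : ∀ A B : Submodule K V, finrank K A = k → finrank K B = m →
      A ⊓ B = ⊥ → IsCompl A B := by
    intro A B hA hB hAB
    constructor
    · rw [disjoint_iff, hAB]
    · rw [codisjoint_iff]
      apply Submodule.eq_top_of_finrank_eq
      rw [hVrank]
      have h1 := Submodule.finrank_sup_add_finrank_inf_eq A B
      rw [hAB, hA, hB] at h1
      simp only [finrank_bot] at h1
      omega
  -- the bipartite Hall system
  set ι := {B : Submodule K V // finrank K B = m} with hι
  set tf : ι → Finset (Submodule K V) :=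
    fun B => Finset.univ.filter (fun A => finrank K A = k ∧ A ⊓ B.1 = ⊥) with htf
  have htcard : ∀ B : ι, (tf B).card = E := by
    intro B
    have : tf B = Finset.univ.filter (fun A => IsCompl B.1 A) := by
      apply Finset.filter_congr
      intro A _
      constructor
      · rintro ⟨hA, hAB⟩
        exact (hiscompl A B.1 hA B.2 hAB).symm
      · intro h
        have h1 := Submodule.finrank_add_eq_of_isCompl h
        rw [B.2, hVrank] at h1
        refine ⟨by omega, ?_⟩
        rw [inf_comm]
        exact disjoint_iff.mp h.disjoint
    rw [this, ← Fintype.card_subtype, ← Nat.card_eq_fintype_card, hcomplB B.1 B.2]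
  have hmemt : ∀ (B : ι) (A : Submodule K V), A ∈ tf B →
      finrank K A = k ∧ A ⊓ B.1 = ⊥ := by
    intro B A hA
    simpa [htf] using (Finset.mem_filter.mp hA).2
  have hEpos : 0 < E := pow_pos Fintype.card_pos _
  have hall : ∀ s : Finset ι, s.card ≤ (s.biUnion tf).card := by
    intro s
    have key : s.card * E ≤ (s.biUnion tf).card * E := by
      have h1 : ∑ B ∈ s, (tf B).card = s.card * E := by
        rw [Finset.sum_congr rfl (fun B _ => htcard B), Finset.sum_const, smul_eq_mul]
      have h2 : ∑ B ∈ s, (tf B).card =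
          ∑ A ∈ s.biUnion tf, (s.filter (fun B => A ∈ tf B)).card := by
        have hsub : ∀ B ∈ s, tf B ⊆ s.biUnion tf := fun B hB =>
          Finset.subset_biUnion_of_mem tf hB
        calc ∑ B ∈ s, (tf B).card
            = ∑ B ∈ s, ∑ A ∈ s.biUnion tf, if A ∈ tf B then 1 else 0 := by
              refine Finset.sum_congr rfl (fun B hB => ?_)
              rw [← Finset.card_filter]
              congr 1
              ext A
              simp only [Finset.mem_filter]
              exact ⟨fun h => ⟨hsub B hB h, h⟩, fun h => h.2⟩
          _ = ∑ A ∈ s.biUnion tf, ∑ B ∈ s, if A ∈ tf B then 1 else 0 :=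
              Finset.sum_comm
          _ = ∑ A ∈ s.biUnion tf, (s.filter (fun B => A ∈ tf B)).card := by
              refine Finset.sum_congr rfl (fun A _ => ?_)
              rw [Finset.card_filter]
      have h3 : ∀ A ∈ s.biUnion tf, (s.filter (fun B => A ∈ tf B)).card ≤ E := by
        intro A hA
        obtain ⟨B₀, _, hAB₀⟩ := Finset.mem_biUnion.mp hA
        have hAk : finrank K A = k := (hmemt B₀ A hAB₀).1
        have hsub : s.filter (fun B => A ∈ tf B) ⊆
            Finset.univ.filter (fun B : ι => IsCompl A B.1) := by
          intro B hB
          rw [Finset.mem_filter] at hB ⊢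
          obtain ⟨h4, h5⟩ := hmemt B A hB.2
          exact ⟨Finset.mem_univ _, hiscompl A B.1 hAk B.2 h5⟩
        calc (s.filter (fun B => A ∈ tf B)).card
            ≤ (Finset.univ.filter (fun B : ι => IsCompl A B.1)).card :=
              Finset.card_le_card hsub
          _ = Nat.card {B : ι // IsCompl A B.1} := by
              rw [← Fintype.card_subtype, Nat.card_eq_fintype_card]
          _ ≤ Nat.card {W : Submodule K V // IsCompl A W} := by
              apply Nat.card_le_card_of_injective
                (f := fun B : {B : ι // IsCompl A B.1} => (⟨B.1.1, B.2⟩ :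
                  {W : Submodule K V // IsCompl A W}))
              intro x y hxy
              simp only [Subtype.mk.injEq] at hxy
              exact Subtype.ext (Subtype.ext hxy)
          _ = E := hcomplA A hAk
      calc s.card * E = ∑ B ∈ s, (tf B).card := h1.symm
        _ = ∑ A ∈ s.biUnion tf, (s.filter (fun B => A ∈ tf B)).card := h2
        _ ≤ ∑ A ∈ s.biUnion tf, E := Finset.sum_le_sum h3
        _ = (s.biUnion tf).card * E := by rw [Finset.sum_const, smul_eq_mul]
    exact Nat.le_of_mul_le_mul_right key hEpos
  obtain ⟨f, hfinj, hft⟩ :=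
    (Finset.all_card_le_biUnion_card_iff_existsInjective' tf).mp hall
  -- assemble
  set Fk := 𝓕.filter (fun A : Submodule K V => finrank K A = k) with hFk
  set Fm := 𝓕.filter (fun A : Submodule K V => finrank K A = m) with hFm
  set g : Submodule K V → Submodule K V :=
    fun B => if h : finrank K B = m then f ⟨B, h⟩ else ⊥ with hg
  have hgmem : ∀ B ∈ Fm, finrank K (g B) = k ∧ g B ⊓ B = ⊥ := by
    intro B hB
    have hBm : finrank K B = m := (Finset.mem_filter.mp hB).2
    have h1 := hmemt ⟨B, hBm⟩ _ (hft ⟨B, hBm⟩)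
    have hgB : g B = f ⟨B, hBm⟩ := dif_pos hBm
    rw [hgB]
    exact h1
  have hginj : Set.InjOn g Fm := by
    intro B1 h1 B2 h2 h12
    have hB1 : finrank K B1 = m := (Finset.mem_filter.mp h1).2
    have hB2 : finrank K B2 = m := (Finset.mem_filter.mp h2).2
    rw [hg] at h12
    simp only [dif_pos hB1, dif_pos hB2] at h12
    exact congrArg Subtype.val (hfinj h12)
  have hdisj : Disjoint Fk (Fm.image g) := by
    rw [Finset.disjoint_left]
    intro A hA hA'
    obtain ⟨B, hB, rfl⟩ := Finset.mem_image.mp hA'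
    have hBF : B ∈ 𝓕 := (Finset.mem_filter.mp hB).1
    have hAF : g B ∈ 𝓕 := (Finset.mem_filter.mp hA).1
    have hAk : finrank K (g B) = k := (Finset.mem_filter.mp hA).2
    have hBm : finrank K B = m := (Finset.mem_filter.mp hB).2
    have hinf : g B ⊓ B = ⊥ := (hgmem B hB).2
    have := hdiam (g B) hAF B hBF
    rw [hinf, hAk, hBm] at this
    simp only [finrank_bot] at this
    omega
  have hsubset : Fk ∪ Fm.image g ⊆
      Finset.univ.filter (fun A : Submodule K V => finrank K A = k) := by
    intro A hA
    rw [Finset.mem_union] at hA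
    rw [Finset.mem_filter]
    refine ⟨Finset.mem_univ _, ?_⟩
    rcases hA with hA | hA
    · exact (Finset.mem_filter.mp hA).2
    · obtain ⟨B, hB, rfl⟩ := Finset.mem_image.mp hA
      exact (hgmem B hB).1
  calc Fk.card + Fm.card = Fk.card + (Fm.image g).card := by
        rw [Finset.card_image_of_injOn hginj]
    _ = (Fk ∪ Fm.image g).card := (Finset.card_union_of_disjoint hdisj).symm
    _ ≤ (Finset.univ.filter (fun A : Submodule K V => finrank K A = k)).card :=
        Finset.card_le_card hsubset
    _ = gbinom (Fintype.card K) n k := by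
        rw [← Fintype.card_subtype, ← Nat.card_eq_fintype_card]
        exact card_subspaces (K := K) n k V hVrank
end

section
/- Let q ≥ 2, t ≥ 1, n > 2t, and M with n - M - t ≥ 1. Then the ratio q^{Mt}[n-M choose t]_q / [n choose t]_q = Π_{i=1}^{t} (q^{n-t+i} - q^M)/(q^{n-t+i} - 1) is at least Π_{i=1}^{t} (1 - q^{-(1+i)}). -/
namespace gbinom

variable (q : ℕ)

@[simp]
theorem zero_right (n : ℕ) : gbinom q n 0 = 1 := by
  cases n <;> rfl

@[simp]
theorem zero_succ (k : ℕ) : gbinom q 0 (k + 1) = 0 := rfl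

theorem succ_succ (n k : ℕ) :
    gbinom q (n + 1) (k + 1) = gbinom q n k + q ^ (k + 1) * gbinom q n (k + 1) := rfl

/-- The `q`-analogue of `(k + 1) * choose (n + 1) (k + 1) = (n + 1) * choose n k`. -/
theorem succ_mul_succ {R : Type*} [CommRing R] (n k : ℕ) :
    ((q : R) ^ (k + 1) - 1) * gbinom q (n + 1) (k + 1) =
      ((q : R) ^ (n + 1) - 1) * gbinom q n k := by
  induction n generalizing k with
  | zero => cases k <;> simp [succ_succ]
  | succ n ih =>
    cases k with
    | zero =>
      have hpascal : (gbinom q (n + 2) 1 : R) = 1 + q * gbinom q (n + 1) 1 := by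
        simp [succ_succ]
      have h := ih 0
      simp only [zero_right, Nat.cast_one, mul_one] at h ⊢
      linear_combination (↑q - 1) * hpascal + ↑q * h
    | succ k =>
      have hpascal₁ : (gbinom q (n + 2) (k + 2) : R) =
          gbinom q (n + 1) (k + 1) + (q : R) ^ (k + 2) * gbinom q (n + 1) (k + 2) := by
        simp [succ_succ]
      have hpascal₀ : (gbinom q (n + 1) (k + 1) : R) =
          gbinom q n k + (q : R) ^ (k + 1) * gbinom q n (k + 1) := by
        simp [succ_succ]
      linear_combination ((q : R) ^ (k + 2) - 1) * hpascal₁ + (q : R) ^ (k + 2) * ih (k + 1)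
        + (q : R) * ih k - (q : R) * ((q : R) ^ (n + 1) - 1) * hpascal₀

theorem cast_eq_prod {q : ℕ} (hq : 1 < (q : ℝ)) {n t : ℕ} (h : t ≤ n) :
    (gbinom q n t : ℝ) = ∏ i ∈ Finset.Icc 1 t, ((q : ℝ) ^ (n - t + i) - 1) / ((q : ℝ) ^ i - 1) := by
  induction t generalizing n with
  | zero => simp
  | succ t ih =>
    obtain ⟨m, rfl⟩ : ∃ m, n = m + 1 := ⟨n - 1, by omega⟩
    have hden : (q : ℝ) ^ (t + 1) - 1 ≠ 0 := (sub_pos.2 (one_lt_pow₀ hq t.succ_ne_zero)).ne'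
    rw [Finset.prod_Icc_succ_top (by omega), show m + 1 - (t + 1) = m - t by omega,
      show m - t + (t + 1) = m + 1 by omega, ← ih (by omega), mul_div_assoc', eq_div_iff hden]
    linear_combination succ_mul_succ (R := ℝ) q m t

theorem pow_mul_div_eq_prod {q : ℕ} (hq : 1 < (q : ℝ)) {n t M : ℕ} (h : M + t ≤ n) :
    (q : ℝ) ^ (M * t) * gbinom q (n - M) t / gbinom q n t =
      ∏ i ∈ Finset.Icc 1 t, ((q : ℝ) ^ (n - t + i) - q ^ M) / ((q : ℝ) ^ (n - t + i) - 1) := by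
  have hpow : (q : ℝ) ^ (M * t) = ∏ _i ∈ Finset.Icc 1 t, (q : ℝ) ^ M := by
    rw [Finset.prod_const, Nat.card_Icc, ← pow_mul, Nat.add_sub_cancel]
  rw [cast_eq_prod hq (by omega), cast_eq_prod hq (by omega), hpow, ← Finset.prod_mul_distrib,
    ← Finset.prod_div_distrib]
  refine Finset.prod_congr rfl fun i hi => ?_
  have hden : (q : ℝ) ^ i - 1 ≠ 0 :=
    (sub_pos.2 (one_lt_pow₀ hq (Nat.one_le_iff_ne_zero.1 (Finset.mem_Icc.1 hi).1))).ne'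
  rw [mul_div_assoc', div_div_div_cancel_right₀ hden, mul_sub, mul_one, ← pow_add,
    show M + (n - M - t + i) = n - t + i by omega]

end gbinom

theorem one_sub_inv_pow_le_div {x : ℝ} (hx : 1 < x) {k M a : ℕ} (hk : 0 < k) (h : M + k ≤ a) :
    1 - x⁻¹ ^ k ≤ (x ^ a - x ^ M) / (x ^ a - 1) := by
  have hxk : 0 < x ^ k := by positivity
  have hxa : 1 < x ^ a := one_lt_pow₀ hx (by omega)
  have hmono : x ^ M * x ^ k ≤ x ^ a := pow_add x M k ▸ pow_le_pow_right₀ hx.le h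
  rw [inv_pow, inv_eq_one_div, one_sub_div hxk.ne', div_le_div_iff₀ hxk (by linarith)]
  linarith [one_le_pow₀ (n := k) hx.le]

theorem ratio_ge_prod_general (q t n M : ℕ) (hq : 2 ≤ q) (hM : M + t + 1 ≤ n) :
    ∏ i ∈ Finset.Icc 1 t, (1 - ((q : ℝ)⁻¹) ^ (1 + i)) ≤
      (q : ℝ) ^ (M * t) * gbinom q (n - M) t / gbinom q n t := by
  have hq₁ : (1 : ℝ) < q := by exact_mod_cast hq
  rw [gbinom.pow_mul_div_eq_prod hq₁ (by omega)]
  refine Finset.prod_le_prod (fun i _ => ?_) (fun i hi => ?_)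
  · exact sub_nonneg.2 (pow_le_one₀ (by positivity) (inv_le_one_of_one_le₀ hq₁.le))
  · exact one_sub_inv_pow_le_div hq₁ (by omega) (by simp only [Finset.mem_Icc] at hi; omega)

/-- For `q ≥ 2`, `t ≥ 1`, `n > 2t` and `M + t + 1 ≤ n`,
`q^{Mt} [n-M choose t]_q / [n choose t]_q ≥ Π_{i=1}^t (1 - q^{-(1+i)})`. -/
theorem ratio_ge_prod (q t n M : ℕ) (hq : 2 ≤ q) (ht : 1 ≤ t)
    (hn : 2 * t < n) (hM : M + t + 1 ≤ n) :
    ∏ i ∈ Finset.Icc 1 t, (1 - ((q : ℝ)⁻¹) ^ (1 + i)) ≤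
      (q : ℝ) ^ (M * t) * gbinom q (n - M) t / gbinom q n t :=
  ratio_ge_prod_general q t n M hq hM
end

section
/- Fix a prime power q, integers t ≥ 1 and n, and m ≥ t + 1. Then Σ_{k=m}^{∞} [n-k+t choose t]_q / [n choose t]_q < 1/(q^t - 1). -/
lemma gbinom_pos (q : ℕ) : ∀ n k, k ≤ n → 1 ≤ gbinom q n k := by
  intro n
  induction n with
  | zero => intro k hk; interval_cases k; simp [gbinom]
  | succ n ih =>
    intro k hk
    match k with
    | 0 => simp [gbinom]
    | k + 1 =>
      have := ih k (by omega)
      simp only [gbinom]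
      omega

lemma gbinom_step (q a s : ℕ) :
    q ^ (s + 1) * gbinom q a (s + 1) ≤ gbinom q (a + 1) (s + 1) := by
  simp only [gbinom]; omega

lemma gbinom_mul_pow_le (q t : ℕ) (ht : 1 ≤ t) (a d : ℕ) :
    q ^ (t * d) * gbinom q a t ≤ gbinom q (a + d) t := by
  induction d with
  | zero => simp
  | succ d ih =>
    obtain ⟨s, rfl⟩ : ∃ s, t = s + 1 := ⟨t - 1, by omega⟩
    calc q ^ ((s + 1) * (d + 1)) * gbinom q a (s + 1)
        = q ^ (s + 1) * (q ^ ((s + 1) * d) * gbinom q a (s + 1)) := by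
          rw [← mul_assoc, ← pow_add]; ring_nf
      _ ≤ q ^ (s + 1) * gbinom q (a + d) (s + 1) := Nat.mul_le_mul_left _ ih
      _ ≤ gbinom q (a + d + 1) (s + 1) := gbinom_step q (a + d) s
      _ = gbinom q (a + (d + 1)) (s + 1) := by ring_nf

/-- `Σ_{k=m}^∞ [n-k+t choose t]_q / [n choose t]_q < 1/(q^t - 1)` for `m ≥ t + 1`,
with the convention that the summand vanishes when `n - k + t < t`, i.e. `k > n`. -/
theorem tail_sum_lt (q t n m : ℕ) (hpp : IsPrimePow q) (ht : 1 ≤ t)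
    (hm : t + 1 ≤ m) (hnm : m ≤ n) :
    (∑' k : ℕ, if m ≤ k ∧ k ≤ n then (gbinom q (n - k + t) t : ℝ) else 0) /
      gbinom q n t < 1 / (q ^ t - 1) := by
  have hq2 : 2 ≤ q := hpp.two_le
  have hqR : (2 : ℝ) ≤ (q : ℝ) := by exact_mod_cast hq2
  set Q : ℝ := (q : ℝ) ^ t with hQ
  have hQ2 : (2 : ℝ) ≤ Q := by
    calc (2:ℝ) ≤ (q:ℝ) := hqR
      _ = (q:ℝ) ^ 1 := (pow_one _).symm
      _ ≤ Q := pow_le_pow_right₀ (by linarith) ht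
  have hQ1 : (0 : ℝ) < Q - 1 := by linarith
  have hQpos : (0 : ℝ) < Q := by linarith
  set r : ℝ := Q⁻¹ with hr
  have hr0 : 0 < r := inv_pos.mpr hQpos
  have hr1 : r < 1 := by
    rw [hr, inv_lt_one_iff₀]; right; linarith
  set C : ℝ := (gbinom q n t : ℝ) with hC
  have hCpos : 0 < C := by
    have h := gbinom_pos q n t (by omega)
    rw [hC]
    exact_mod_cast Nat.lt_of_lt_of_le Nat.zero_lt_one h
  -- the tsum is a finite sum over Icc m n
  have hsupp : ∀ k ∉ Finset.Icc m n,
      (if m ≤ k ∧ k ≤ n then (gbinom q (n - k + t) t : ℝ) else 0) = 0 := by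
    intro k hk
    rw [if_neg]
    simpa [Finset.mem_Icc] using hk
  rw [tsum_eq_sum hsupp]
  have hsum : ∑ k ∈ Finset.Icc m n,
      (if m ≤ k ∧ k ≤ n then (gbinom q (n - k + t) t : ℝ) else 0)
      = ∑ k ∈ Finset.Icc m n, (gbinom q (n - k + t) t : ℝ) := by
    apply Finset.sum_congr rfl
    intro k hk
    rw [if_pos]
    simpa [Finset.mem_Icc] using hk
  rw [hsum]
  -- termwise bound
  have hterm : ∀ k ∈ Finset.Icc m n,
      (gbinom q (n - k + t) t : ℝ) ≤ C * r ^ (k - t) := by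
    intro k hk
    rw [Finset.mem_Icc] at hk
    have key : q ^ (t * (k - t)) * gbinom q (n - k + t) t ≤ gbinom q n t := by
      have := gbinom_mul_pow_le q t ht (n - k + t) (k - t)
      have heq : n - k + t + (k - t) = n := by omega
      rwa [heq] at this
    have keyR : ((q : ℝ) ^ (t * (k - t))) * (gbinom q (n - k + t) t : ℝ) ≤ C := by
      rw [hC]; exact_mod_cast key
    have hqpow : (0 : ℝ) < (q : ℝ) ^ (t * (k - t)) := by positivity
    rw [hr, inv_pow, hQ, ← pow_mul, ← div_eq_mul_inv, le_div_iff₀ hqpow, mul_comm]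
    exact keyR
  have hS : ∑ k ∈ Finset.Icc m n, (gbinom q (n - k + t) t : ℝ)
      ≤ ∑ k ∈ Finset.Icc m n, C * r ^ (k - t) := Finset.sum_le_sum hterm
  -- compute geometric bound
  have hgeo : ∑ k ∈ Finset.Icc m n, C * r ^ (k - t) < C * r ^ (m - t) * (1 - r)⁻¹ := by
    have hIcc : Finset.Icc m n = Finset.Ico m (n + 1) := by
      ext k; simp [Finset.mem_Icc, Finset.mem_Ico]
    rw [hIcc, Finset.sum_Ico_eq_sum_range]
    have : ∀ i, C * r ^ (m + i - t) = C * r ^ (m - t) * r ^ i := by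
      intro i
      rw [mul_assoc, ← pow_add]
      congr 2
      omega
    rw [Finset.sum_congr rfl (fun i _ => this i), ← Finset.mul_sum]
    apply mul_lt_mul_of_pos_left _ (by positivity)
    -- ∑ i in range N, r ^ i < (1 - r)⁻¹
    have hne : r ≠ 1 := ne_of_lt hr1
    rw [geom_sum_eq hne]
    rw [div_lt_iff_of_neg (by linarith : r - 1 < 0)]
    have : 0 < r ^ (n + 1 - m) := pow_pos hr0 _
    field_simp
    rw [div_lt_iff₀ (by linarith : (0:ℝ) < 1 - r)]
    nlinarith [pow_pos hr0 (n + 1 - m)]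
  have hfinal : C * r ^ (m - t) * (1 - r)⁻¹ ≤ C / (Q - 1) := by
    have h1r : 1 - r = (Q - 1) / Q := by
      rw [hr]; field_simp
    rw [h1r, inv_div]
    obtain ⟨e, he⟩ : ∃ e, m - t = e + 1 := ⟨m - t - 1, by omega⟩
    rw [he, pow_succ]
    have hre : r ^ e ≤ 1 := pow_le_one₀ (le_of_lt hr0) (le_of_lt hr1)
    have : C * (r ^ e * r) * (Q / (Q - 1)) = C * r ^ e / (Q - 1) := by
      rw [hr]; field_simp
    rw [this]
    gcongr
    nlinarith
  have hcast : ((q : ℝ) ^ t - 1) = Q - 1 := by rw [hQ]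
  rw [div_lt_div_iff₀ hCpos (by rw [hcast] at *; exact hQ1)]
  calc (∑ k ∈ Finset.Icc m n, (gbinom q (n - k + t) t : ℝ)) * ((q:ℝ) ^ t - 1)
      = (∑ k ∈ Finset.Icc m n, (gbinom q (n - k + t) t : ℝ)) * (Q - 1) := by rw [hcast]
    _ ≤ (∑ k ∈ Finset.Icc m n, C * r ^ (k - t)) * (Q - 1) := by
        apply mul_le_mul_of_nonneg_right hS (le_of_lt hQ1)
    _ < (C * r ^ (m - t) * (1 - r)⁻¹) * (Q - 1) := by
        apply mul_lt_mul_of_pos_right hgeo hQ1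
    _ ≤ (C / (Q - 1)) * (Q - 1) := mul_le_mul_of_nonneg_right hfinal (le_of_lt hQ1)
    _ = C := by field_simp
    _ = 1 * C := (one_mul C).symm
end
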